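/- Suppose the feasible class U is nonempty, and suppose that for every distinct pair u, v ∈ U there exist a context c ∈ A^r and a symbol a ∈ A such that η_v(c)·u(c,a) ≠ η_u(c)·v(c,a). Then the entropy-rate functional J has a unique maximizer on U. -/
import Mathlib


open Finset

/-- Context marginal of a block law on `A^(n+1) × A` (contexts are `Fin (n+1) → A`,
so the memory length is `r = n+1 ≥ 1`). -/
noncomputable def eta {A : Type*} [Fintype A] {n : ℕ}
    (u : (Fin (n + 1) → A) → A → ℝ) (c : Fin (n + 1) → A) : ℝ :=
  ∑ a, u c a

/-- Entropy-rate functional.  In Lean, `Real.log 0 = 0` and `0 * x = 0`, so the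
conventions `0·log 0 = 0` and "terms with `u(c,a) = 0` contribute `0`" hold
automatically. -/
noncomputable def J {A : Type*} [Fintype A] {n : ℕ}
    (u : (Fin (n + 1) → A) → A → ℝ) : ℝ :=
  -∑ c, ∑ a, u c a * Real.log (u c a / eta u c)

/-- A block law: nonnegative entries with total mass one. -/
def IsBlockLaw {A : Type*} [Fintype A] {n : ℕ}
    (u : (Fin (n + 1) → A) → A → ℝ) : Prop :=
  (∀ c a, 0 ≤ u c a) ∧ ∑ c, ∑ a, u c a = 1

/-- The context `(α, d₁, …, d_{r-1})` obtained from `d = (d₁, …, d_r)` by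
prepending `α` and dropping the last entry. -/
def shiftCtx {A : Type*} {n : ℕ} (α : A) (d : Fin (n + 1) → A) : Fin (n + 1) → A :=
  Fin.cons α (fun i : Fin n => d i.castSucc)

/-- Stationary consistency:
`∑_α u((α,d₁,…,d_{r-1}), d_r) = ∑_β u(d, β)` for every block `d`. -/
def StationaryConsistent {A : Type*} [Fintype A] {n : ℕ}
    (u : (Fin (n + 1) → A) → A → ℝ) : Prop :=
  ∀ d : Fin (n + 1) → A,
    ∑ α : A, u (shiftCtx α d) (d (Fin.last n)) = ∑ β : A, u d β

/-- The feasible class determined by features `G` and targets `b`. -/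
def Feasible {A : Type*} [Fintype A] {n m : ℕ}
    (G : Fin m → (Fin (n + 1) → A) → A → ℝ) (b : Fin m → ℝ)
    (u : (Fin (n + 1) → A) → A → ℝ) : Prop :=
  IsBlockLaw u ∧ StationaryConsistent u ∧
    ∀ j, ∑ c, ∑ a, u c a * G j c a = b j

section Aux

lemma logsum_le {x x' y y' : ℝ} (hx : 0 ≤ x) (hx' : 0 ≤ x')
    (hxy : x ≤ y) (hxy' : x' ≤ y') :
    (x + x') * Real.log ((x + x') / (y + y')) ≤
      x * Real.log (x / y) + x' * Real.log (x' / y') := by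
  rcases eq_or_lt_of_le (hx.trans hxy) with hy | hy
  · have hx0 : x = 0 := le_antisymm (hy ▸ hxy) hx
    simp [hx0, ← hy]
  rcases eq_or_lt_of_le (hx'.trans hxy') with hy' | hy'
  · have hx0 : x' = 0 := le_antisymm (hy' ▸ hxy') hx'
    simp [hx0, ← hy']
  · have hs : (0:ℝ) < y + y' := by linarith
    have hs0 : y + y' ≠ 0 := ne_of_gt hs
    have hy0 : y ≠ 0 := ne_of_gt hy
    have hy'0 : y' ≠ 0 := ne_of_gt hy'
    have h1 : y/(y+y') * (x/y) + y'/(y+y') * (x'/y') = (x+x')/(y+y') := by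
      field_simp
    have key := Real.convexOn_mul_log.2 (Set.mem_Ici.2 (div_nonneg hx hy.le))
      (Set.mem_Ici.2 (div_nonneg hx' hy'.le)) (div_nonneg hy.le hs.le)
      (div_nonneg hy'.le hs.le) (by field_simp)
    simp only [smul_eq_mul] at key
    rw [h1] at key
    have key' := mul_le_mul_of_nonneg_left key hs.le
    set L := Real.log ((x+x')/(y+y')) with hL
    set Lx := Real.log (x/y) with hLx
    set Lx' := Real.log (x'/y') with hLx'
    have eL : (y+y') * ((x+x')/(y+y') * L) = (x+x') * L := by
      field_simp
    have eR : (y+y') * (y/(y+y') * (x/y * Lx) + y'/(y+y') * (x'/y' * Lx')) =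
        x * Lx + x' * Lx' := by
      field_simp
    rw [eL, eR] at key'
    exact key'

lemma logsum_lt {x x' y y' : ℝ} (hx : 0 ≤ x) (hx' : 0 ≤ x')
    (hxy : x ≤ y) (hxy' : x' ≤ y') (hne : x * y' ≠ x' * y) :
    (x + x') * Real.log ((x + x') / (y + y')) <
      x * Real.log (x / y) + x' * Real.log (x' / y') := by
  have hy : 0 < y := by
    rcases eq_or_lt_of_le (hx.trans hxy) with h | h
    · exact absurd (by rw [le_antisymm (h ▸ hxy) hx, ← h]; ring) hne
    · exact h
  have hy' : 0 < y' := by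
    rcases eq_or_lt_of_le (hx'.trans hxy') with h | h
    · exact absurd (by rw [le_antisymm (h ▸ hxy') hx', ← h]; ring) hne
    · exact h
  have hs : (0:ℝ) < y + y' := by linarith
  have hs0 : y + y' ≠ 0 := ne_of_gt hs
  have hy0 : y ≠ 0 := ne_of_gt hy
  have hy'0 : y' ≠ 0 := ne_of_gt hy'
  have hT : x / y ≠ x' / y' := by
    intro h
    exact hne (by rw [div_eq_div_iff hy0 hy'0] at h; exact h)
  have h1 : y/(y+y') * (x/y) + y'/(y+y') * (x'/y') = (x+x')/(y+y') := by
    field_simp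
  have key := Real.strictConvexOn_mul_log.2 (Set.mem_Ici.2 (div_nonneg hx hy.le))
    (Set.mem_Ici.2 (div_nonneg hx' hy'.le)) hT (div_pos hy hs)
    (div_pos hy' hs) (by field_simp)
  simp only [smul_eq_mul] at key
  rw [h1] at key
  have key' := mul_lt_mul_of_pos_left key hs
  set L := Real.log ((x+x')/(y+y')) with hL
  set Lx := Real.log (x/y) with hLx
  set Lx' := Real.log (x'/y') with hLx'
  have eL : (y+y') * ((x+x')/(y+y') * L) = (x+x') * L := by
    field_simp
  have eR : (y+y') * (y/(y+y') * (x/y * Lx) + y'/(y+y') * (x'/y' * Lx')) =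
      x * Lx + x' * Lx' := by
    field_simp
  rw [eL, eR] at key'
  exact key'

variable {A : Type*} [Fintype A] {n m : ℕ}

lemma eta_mid (u v : (Fin (n + 1) → A) → A → ℝ) (c : Fin (n + 1) → A) :
    eta (fun c a => (u c a + v c a) / 2) c = (eta u c + eta v c) / 2 := by
  simp only [eta]
  rw [← Finset.sum_div, Finset.sum_add_distrib]

lemma le_eta {u : (Fin (n + 1) → A) → A → ℝ} (hu : ∀ c a, 0 ≤ u c a)
    (c : Fin (n + 1) → A) (a : A) : u c a ≤ eta u c :=
  Finset.single_le_sum (fun a _ => hu c a) (mem_univ a)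

lemma eta_nonneg {u : (Fin (n + 1) → A) → A → ℝ} (hu : ∀ c a, 0 ≤ u c a)
    (c : Fin (n + 1) → A) : 0 ≤ eta u c :=
  Finset.sum_nonneg fun a _ => hu c a

lemma term_rw (u v : (Fin (n + 1) → A) → A → ℝ) (c : Fin (n + 1) → A) (a : A) :
    (fun c a => (u c a + v c a) / 2) c a *
      Real.log ((fun c a => (u c a + v c a) / 2) c a /
        eta (fun c a => (u c a + v c a) / 2) c) =
    ((u c a + v c a) * Real.log ((u c a + v c a) / (eta u c + eta v c))) / 2 := by
  simp only [eta_mid]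
  rw [div_div_div_cancel_right₀ (two_ne_zero)]
  ring

lemma sum_half (f g : (Fin (n+1) → A) → A → ℝ) :
    ∑ c, ∑ a, (f c a + g c a) / 2 =
      ((∑ c, ∑ a, f c a) + ∑ c, ∑ a, g c a) / 2 := by
  calc ∑ c, ∑ a, (f c a + g c a) / 2
      = ∑ c, ((∑ a, f c a) + ∑ a, g c a) / 2 :=
        Finset.sum_congr rfl fun c _ => by rw [← Finset.sum_div, Finset.sum_add_distrib]
    _ = _ := by rw [← Finset.sum_div, Finset.sum_add_distrib]

lemma J_mid_le {u v : (Fin (n + 1) → A) → A → ℝ}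
    (hu : ∀ c a, 0 ≤ u c a) (hv : ∀ c a, 0 ≤ v c a) :
    (J u + J v) / 2 ≤ J (fun c a => (u c a + v c a) / 2) := by
  have hterm : ∀ c a, (fun c a => (u c a + v c a) / 2) c a *
      Real.log ((fun c a => (u c a + v c a) / 2) c a /
        eta (fun c a => (u c a + v c a) / 2) c) ≤
      (u c a * Real.log (u c a / eta u c) + v c a * Real.log (v c a / eta v c)) / 2 := by
    intro c a
    rw [term_rw u v c a]
    have := logsum_le (hu c a) (hv c a) (le_eta hu c a) (le_eta hv c a)
    linarith
  have hsum := Finset.sum_le_sum (s := univ)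
    (fun c (_ : c ∈ univ) => Finset.sum_le_sum fun a (_ : a ∈ univ) => hterm c a)
  rw [sum_half] at hsum
  unfold J
  linarith

lemma J_mid_lt {u v : (Fin (n + 1) → A) → A → ℝ}
    (hu : ∀ c a, 0 ≤ u c a) (hv : ∀ c a, 0 ≤ v c a)
    {c0 : Fin (n+1) → A} {a0 : A}
    (hne : eta v c0 * u c0 a0 ≠ eta u c0 * v c0 a0) :
    (J u + J v) / 2 < J (fun c a => (u c a + v c a) / 2) := by
  have hterm : ∀ c a, (fun c a => (u c a + v c a) / 2) c a *
      Real.log ((fun c a => (u c a + v c a) / 2) c a /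
        eta (fun c a => (u c a + v c a) / 2) c) ≤
      (u c a * Real.log (u c a / eta u c) + v c a * Real.log (v c a / eta v c)) / 2 := by
    intro c a
    rw [term_rw u v c a]
    have := logsum_le (hu c a) (hv c a) (le_eta hu c a) (le_eta hv c a)
    linarith
  have hterm0 : (fun c a => (u c a + v c a) / 2) c0 a0 *
      Real.log ((fun c a => (u c a + v c a) / 2) c0 a0 /
        eta (fun c a => (u c a + v c a) / 2) c0) <
      (u c0 a0 * Real.log (u c0 a0 / eta u c0) + v c0 a0 * Real.log (v c0 a0 / eta v c0)) / 2 := by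
    rw [term_rw u v c0 a0]
    have := logsum_lt (hu c0 a0) (hv c0 a0) (le_eta hu c0 a0) (le_eta hv c0 a0)
      (by rw [mul_comm (u c0 a0), mul_comm (v c0 a0)]; exact hne)
    linarith
  have hinner : ∑ a, (fun c a => (u c a + v c a) / 2) c0 a *
      Real.log ((fun c a => (u c a + v c a) / 2) c0 a /
        eta (fun c a => (u c a + v c a) / 2) c0) <
      ∑ a, (u c0 a * Real.log (u c0 a / eta u c0) + v c0 a * Real.log (v c0 a / eta v c0)) / 2 :=
    Finset.sum_lt_sum (fun a _ => hterm c0 a) ⟨a0, mem_univ a0, hterm0⟩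
  have hsum : ∑ c, ∑ a, (fun c a => (u c a + v c a) / 2) c a *
      Real.log ((fun c a => (u c a + v c a) / 2) c a /
        eta (fun c a => (u c a + v c a) / 2) c) <
      ∑ c, ∑ a, (u c a * Real.log (u c a / eta u c) + v c a * Real.log (v c a / eta v c)) / 2 :=
    Finset.sum_lt_sum (fun c _ => Finset.sum_le_sum fun a _ => hterm c a)
      ⟨c0, mem_univ c0, hinner⟩
  rw [sum_half] at hsum
  unfold J
  linarith

noncomputable def Jalt {A : Type*} [Fintype A] {n : ℕ}
    (u : (Fin (n + 1) → A) → A → ℝ) : ℝ :=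
  ∑ c, ((∑ a, Real.negMulLog (u c a)) - Real.negMulLog (eta u c))

lemma J_eq {u : (Fin (n + 1) → A) → A → ℝ} (hu : ∀ c a, 0 ≤ u c a) :
    J u = Jalt u := by
  unfold J Jalt
  rw [← Finset.sum_neg_distrib]
  refine Finset.sum_congr rfl fun c _ => ?_
  have hterm : ∀ a, u c a * Real.log (u c a / eta u c) =
      u c a * Real.log (u c a) - u c a * Real.log (eta u c) := by
    intro a
    rcases eq_or_lt_of_le (hu c a) with h | h
    · simp [← h]
    · have he : 0 < eta u c := lt_of_lt_of_le h (le_eta hu c a)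
      rw [Real.log_div (ne_of_gt h) (ne_of_gt he), mul_sub]
  rw [Finset.sum_congr rfl fun a _ => hterm a, Finset.sum_sub_distrib,
    ← Finset.sum_mul]
  simp only [Real.negMulLog, eta]
  have h2 : ∑ a : A, -u c a * Real.log (u c a) = -∑ a : A, u c a * Real.log (u c a) := by
    simp [neg_mul]
  rw [h2]
  ring

lemma feasible_mid {G : Fin m → (Fin (n + 1) → A) → A → ℝ} {b : Fin m → ℝ}
    {u v : (Fin (n + 1) → A) → A → ℝ}
    (hu : Feasible G b u) (hv : Feasible G b v) :
    Feasible G b (fun c a => (u c a + v c a) / 2) := by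
  obtain ⟨⟨hu0, hu1⟩, hus, huG⟩ := hu
  obtain ⟨⟨hv0, hv1⟩, hvs, hvG⟩ := hv
  refine ⟨⟨fun c a => by have := hu0 c a; have := hv0 c a; positivity, ?_⟩, ?_, ?_⟩
  · rw [sum_half, hu1, hv1]; norm_num
  · intro d
    have h1 := hus d
    have h2 := hvs d
    simp only
    rw [← Finset.sum_div, ← Finset.sum_div, Finset.sum_add_distrib, Finset.sum_add_distrib,
      h1, h2]
  · intro j
    have h1 := huG j
    have h2 := hvG j
    calc ∑ c, ∑ a, (u c a + v c a) / 2 * G j c a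
        = ∑ c, ∑ a, (u c a * G j c a + v c a * G j c a) / 2 := by
          refine Finset.sum_congr rfl fun c _ => Finset.sum_congr rfl fun a _ => by ring
      _ = ((∑ c, ∑ a, u c a * G j c a) + ∑ c, ∑ a, v c a * G j c a) / 2 := sum_half _ _
      _ = b j := by rw [h1, h2]; norm_num

lemma feasible_isCompact (G : Fin m → (Fin (n + 1) → A) → A → ℝ) (b : Fin m → ℝ) :
    IsCompact {u : (Fin (n + 1) → A) → A → ℝ | Feasible G b u} := by
  have hev : ∀ (c : Fin (n+1) → A) (a : A),
      Continuous fun u : (Fin (n + 1) → A) → A → ℝ => u c a :=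
    fun c a => (continuous_apply a).comp (continuous_apply c)
  have hsum : ∀ (F : ((Fin (n+1) → A) → A → ℝ) → ℝ), True := fun _ => trivial
  have hclosed : IsClosed {u : (Fin (n + 1) → A) → A → ℝ | Feasible G b u} := by
    have e : {u : (Fin (n + 1) → A) → A → ℝ | Feasible G b u} =
        (⋂ c, ⋂ a, {u : (Fin (n + 1) → A) → A → ℝ | 0 ≤ u c a}) ∩
        ({u : (Fin (n + 1) → A) → A → ℝ | ∑ c, ∑ a, u c a = 1} ∩
        ((⋂ d, {u : (Fin (n + 1) → A) → A → ℝ |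
            ∑ α : A, u (shiftCtx α d) (d (Fin.last n)) = ∑ β : A, u d β}) ∩
        (⋂ j, {u : (Fin (n + 1) → A) → A → ℝ | ∑ c, ∑ a, u c a * G j c a = b j}))) := by
      ext u
      simp only [Set.mem_setOf_eq, Set.mem_inter_iff, Set.mem_iInter, Feasible, IsBlockLaw,
        StationaryConsistent]
      tauto
    rw [e]
    refine IsClosed.inter ?_ (IsClosed.inter ?_ (IsClosed.inter ?_ ?_))
    · exact isClosed_iInter fun c => isClosed_iInter fun a =>
        isClosed_le continuous_const (hev c a)
    · exact isClosed_eq (by continuity) continuous_const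
    · exact isClosed_iInter fun d => isClosed_eq (by continuity) (by continuity)
    · exact isClosed_iInter fun j => isClosed_eq (by continuity) continuous_const
  have hbox : IsCompact (Set.pi Set.univ fun _ : Fin (n+1) → A =>
      Set.pi Set.univ fun _ : A => Set.Icc (0:ℝ) 1) :=
    isCompact_univ_pi fun _ => isCompact_univ_pi fun _ => isCompact_Icc
  refine IsCompact.of_isClosed_subset hbox hclosed ?_
  intro u hu
  obtain ⟨⟨hu0, hu1⟩, -, -⟩ := hu
  intro c _
  intro a _
  refine ⟨hu0 c a, ?_⟩
  rw [← hu1]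
  calc u c a ≤ ∑ a', u c a' := Finset.single_le_sum (fun a' _ => hu0 c a') (mem_univ a)
    _ ≤ ∑ c', ∑ a', u c' a' :=
        Finset.single_le_sum (f := fun c' => ∑ a', u c' a')
          (fun c' _ => Finset.sum_nonneg fun a' _ => hu0 c' a') (mem_univ c)

lemma Jalt_continuous : Continuous (Jalt (A := A) (n := n)) := by
  unfold Jalt
  refine continuous_finset_sum _ fun c _ => Continuous.sub ?_ ?_
  · exact continuous_finset_sum _ fun a _ =>
      Real.continuous_negMulLog.comp ((continuous_apply a).comp (continuous_apply c))
  · exact Real.continuous_negMulLog.comp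
      (continuous_finset_sum _ fun a _ => (continuous_apply a).comp (continuous_apply c))

end Aux

/-- If the feasible class is nonempty and no two distinct feasible
laws are rowwise proportional in every context, then `J` has a unique maximizer
on the feasible class. -/
theorem stmt4 {A : Type*} [Fintype A] [Nonempty A] {n m : ℕ}
    (G : Fin m → (Fin (n + 1) → A) → A → ℝ) (b : Fin m → ℝ)
    (hne : ∃ u, Feasible G b u)
    (hsep : ∀ u v, Feasible G b u → Feasible G b v → u ≠ v →
      ∃ c a, eta v c * u c a ≠ eta u c * v c a) :
    ∃! ustar, Feasible G b ustar ∧ ∀ u, Feasible G b u → J u ≤ J ustar := by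
  obtain ⟨u0, hu0⟩ := hne
  obtain ⟨ustar, hmem, hmax'⟩ :=
    (feasible_isCompact G b).exists_isMaxOn ⟨u0, hu0⟩ Jalt_continuous.continuousOn
  have hmax : ∀ u, Feasible G b u → Jalt u ≤ Jalt ustar := fun u hu => hmax' hu
  have hmaxJ : ∀ u, Feasible G b u → J u ≤ J ustar := by
    intro u hu
    rw [J_eq hu.1.1, J_eq hmem.1.1]
    exact hmax u hu
  refine ⟨ustar, ⟨hmem, hmaxJ⟩, ?_⟩
  rintro v ⟨hvF, hvmax⟩
  by_contra hvne
  obtain ⟨c0, a0, hc⟩ := hsep v ustar hvF hmem hvne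
  have hwF := feasible_mid hvF hmem
  have hlt := J_mid_lt hvF.1.1 hmem.1.1 hc
  have h1 : J ustar ≤ J v := hvmax ustar hmem
  have h2 := hmaxJ _ hwF
  linarith
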